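/- For every squashing function Ψ : ℝ → ℝ, every input dimension r ≥ 1, every output dimension s ≥ 1, every continuous function f : ℝ^r → ℝ^s, every compact set K ⊆ ℝ^r, and every ε > 0, there exist a positive integer N, vectors of output weights β₁,…,β_N ∈ ℝ^s, weight vectors w₁,…,w_N ∈ ℝ^r, and biases θ₁,…,θ_N ∈ ℝ such that sup_{x ∈ K} ‖f(x) − ∑_{i=1}^N β_i Ψ(⟨w_i, x⟩ + θ_i)‖ < ε, where ‖·‖ is the sup norm on ℝ^s (equivalently, each coordinate is approximated uniformly on K within ε). That is, multi-output single-hidden-layer feedforward networks are universal approximators of continuous vector-valued functions, uniformly on compacta. -/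

import Mathlib

open Filter

/-- A squashing function: nondecreasing, with values in `[0,1]`,
tending to `1` at `+∞` and to `0` at `-∞`. -/
def IsSquashing (Ψ : ℝ → ℝ) : Prop :=
  Monotone Ψ ∧ (∀ x, Ψ x ∈ Set.Icc (0 : ℝ) 1) ∧
    Tendsto Ψ atTop (nhds 1) ∧ Tendsto Ψ atBot (nhds 0)

open Finset in
set_option maxHeartbeats 2000000 in
lemma one_dim_approx (Ψ : ℝ → ℝ) (hΨ : IsSquashing Ψ) (g : ℝ → ℝ) (hg : Continuous g)
    (M ε : ℝ) (hM : 0 < M) (hε : 0 < ε) :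
    ∃ (n : ℕ) (c a b : Fin n → ℝ), ∀ t ∈ Set.Icc (-M) M,
      |g t - ∑ i, c i * Ψ (a i * t + b i)| < ε := by
  obtain ⟨hmono, hrange, htop, hbot⟩ := hΨ
  have hucg : UniformContinuousOn g (Set.Icc (-M) M) :=
    (isCompact_Icc).uniformContinuousOn_of_continuous hg.continuousOn
  obtain ⟨δ, hδ0, hδ⟩ := Metric.uniformContinuousOn_iff.mp hucg (ε/6) (by positivity)
  obtain ⟨n, hn⟩ := exists_nat_gt (2*M/δ)
  have hn0 : 0 < (n:ℝ) := lt_trans (by positivity) hn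
  obtain ⟨h, hh_def⟩ : ∃ h:ℝ, h = 2*M/n := ⟨_, rfl⟩
  have hh0 : 0 < h := by rw [hh_def]; positivity
  have hnh : (n:ℝ) * h = 2*M := by rw [hh_def]; field_simp
  have hhδ : h < δ := by
    rw [hh_def, div_lt_iff₀ hn0]
    have h1 : 2*M/δ*δ < n*δ := mul_lt_mul_of_pos_right hn hδ0
    have h2 : 2*M/δ*δ = 2*M := by field_simp
    nlinarith
  obtain ⟨T, hT_def⟩ : ∃ T:ℕ→ℝ, T = fun k : ℕ => -M + (k:ℝ)*h := ⟨_, rfl⟩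
  obtain ⟨μ, hμ_def⟩ : ∃ μ:ℕ→ℝ, μ = fun i : ℕ => -M + (i:ℝ)*h + h/2 := ⟨_, rfl⟩
  obtain ⟨d, hd_def⟩ : ∃ d:ℕ→ℝ, d = fun i : ℕ => g (T (i+1)) - g (T i) := ⟨_, rfl⟩
  have hTmem : ∀ k, k ≤ n → T k ∈ Set.Icc (-M) M := by
    intro k hk
    have hk' : (k:ℝ) ≤ n := by exact_mod_cast hk
    constructor
    · simp only [hT_def]; nlinarith
    · simp only [hT_def]
      have : (k:ℝ) * h ≤ n * h := by nlinarith
      nlinarith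
  have hdsmall : ∀ i, i < n → |d i| ≤ ε/6 := by
    intro i hi
    simp only [hd_def]
    have h1 : T (i+1) ∈ Set.Icc (-M) M := hTmem _ hi
    have h2 : T i ∈ Set.Icc (-M) M := hTmem _ (le_of_lt hi)
    have hdist : dist (T (i+1)) (T i) < δ := by
      simp only [hT_def, Real.dist_eq]
      push_cast
      have he : (-M + ((i:ℝ)+1)*h) - (-M + (i:ℝ)*h) = h := by ring
      rw [he, abs_of_pos hh0]; exact hhδ
    have := hδ _ h1 _ h2 hdist
    rw [Real.dist_eq] at this
    exact le_of_lt this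
  obtain ⟨S, hS_def⟩ : ∃ S:ℝ, S = ∑ i ∈ range n, |d i| := ⟨_, rfl⟩
  have hS0 : 0 ≤ S := hS_def ▸ Finset.sum_nonneg (fun i _ => abs_nonneg _)
  obtain ⟨η, hη_def⟩ : ∃ η:ℝ, η = ε/(6*(S+1)) := ⟨_, rfl⟩
  have hη0 : 0 < η := by rw [hη_def]; positivity
  obtain ⟨B, hB⟩ : ∃ B, (1:ℝ)/2 < Ψ B := by
    obtain ⟨B, hB⟩ := Metric.tendsto_atTop.mp htop (1/2) (by norm_num)
    refine ⟨B, ?_⟩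
    have := hB B le_rfl
    rw [Real.dist_eq] at this
    have := abs_lt.mp this
    linarith [this.1]
  have hΨB : Ψ B ≠ 0 := by linarith
  obtain ⟨A₁, hA₁⟩ := Metric.tendsto_atTop.mp htop η hη0
  obtain ⟨A₂, hA₂⟩ := Filter.mem_atBot_sets.mp (hbot (Metric.ball_mem_nhds (0:ℝ) hη0))
  obtain ⟨Λ, hΛ_def⟩ : ∃ Λ:ℝ, Λ = (max |A₁| |A₂| + h)/h := ⟨_, rfl⟩
  have hΛh : Λ * h = max |A₁| |A₂| + h := by rw [hΛ_def]; field_simp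
  have hmax0 : 0 ≤ max |A₁| |A₂| := le_trans (abs_nonneg _) (le_max_left _ _)
  have hΛ0 : 0 < Λ := by rw [hΛ_def]; positivity
  have hΨhi : ∀ u : ℝ, h ≤ u → 1 - η < Ψ (Λ * u) := by
    intro u hu
    have h1 : A₁ ≤ Λ * u := by
      have h0 : Λ * h ≤ Λ * u := by nlinarith
      have h2 : |A₁| ≤ max |A₁| |A₂| := le_max_left _ _
      have h3 : A₁ ≤ |A₁| := le_abs_self _
      nlinarith [hΛh]
    have := hA₁ _ h1
    rw [Real.dist_eq] at this
    have := abs_lt.mp this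
    linarith [this.1]
  have hΨlo : ∀ u : ℝ, u ≤ -h → Ψ (Λ * u) < η := by
    intro u hu
    have h1 : Λ * u ≤ A₂ := by
      have h0 : Λ * u ≤ Λ * (-h) := by nlinarith
      have h2 : |A₂| ≤ max |A₁| |A₂| := le_max_right _ _
      have h3 : -|A₂| ≤ A₂ := neg_abs_le _
      nlinarith [hΛh]
    have h4 := hA₂ _ h1
    simp only [Set.mem_preimage, Metric.mem_ball, Real.dist_eq, sub_zero] at h4
    have := abs_lt.mp h4
    linarith [this.2]
  refine ⟨n+1, Fin.cons (g (T 0) / Ψ B) (fun i : Fin n => d i),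
    Fin.cons 0 (fun _ => Λ), Fin.cons B (fun i : Fin n => -(Λ * μ i)), ?_⟩
  intro t ht
  have htl := ht.1
  have htr := ht.2
  rw [Fin.sum_univ_succ]
  simp only [Fin.cons_zero, Fin.cons_succ]
  have hconst : g (T 0) / Ψ B * Ψ (0 * t + B) = g (T 0) := by
    rw [zero_mul, zero_add]; field_simp
  rw [hconst]
  have hsum : ∑ i : Fin n, d i * Ψ (Λ * t + -(Λ * μ i))
      = ∑ i ∈ range n, d i * Ψ (Λ * (t - μ i)) := by
    rw [← Fin.sum_univ_eq_sum_range (fun k => d k * Ψ (Λ * (t - μ k))) n]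
    apply Finset.sum_congr rfl
    intro i _
    congr 2
    ring
  rw [hsum]
  obtain ⟨x, hx_def⟩ : ∃ x:ℝ, x = (t+M)/h + 1/2 := ⟨_, rfl⟩
  have hx0 : 0 ≤ x := by
    have h1 : 0 ≤ t + M := by linarith
    have h2 : 0 ≤ (t+M)/h := div_nonneg h1 (le_of_lt hh0)
    rw [hx_def]; linarith
  obtain ⟨j, hj_def⟩ : ∃ j:ℕ, j = ⌊x⌋₊ := ⟨_, rfl⟩
  have hjx : (j:ℝ) ≤ x := hj_def ▸ Nat.floor_le hx0
  have hxj : x < j + 1 := hj_def ▸ Nat.lt_floor_add_one x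
  have hjn : j ≤ n := by
    have hxn : x ≤ n + 1/2 := by
      rw [hx_def]
      have : (t+M)/h ≤ n := by
        rw [div_le_iff₀ hh0]; linarith
      linarith
    have h2 : (j:ℝ) < (n:ℝ)+1 := by linarith
    have h3 : j < n+1 := by exact_mod_cast h2
    omega
  have hTj : T j ∈ Set.Icc (-M) M := hTmem j hjn
  have htTj : |t - T j| < δ := by
    have e1 : ((j:ℝ) - 1/2) * h ≤ t + M := by
      rw [← le_div_iff₀ hh0]; rw [hx_def] at hjx; linarith
    have e2 : t + M < ((j:ℝ) + 1/2) * h := by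
      rw [← div_lt_iff₀ hh0]; rw [hx_def] at hxj; linarith
    have e1' : (j:ℝ)*h - h/2 ≤ t + M := by linear_combination e1
    have e2' : t + M < (j:ℝ)*h + h/2 := by linear_combination e2
    have habs : |t - T j| ≤ h/2 := by
      rw [abs_le]
      simp only [hT_def]
      constructor
      · linarith
      · linarith
    linarith
  have hgt : |g t - g (T j)| < ε/6 := by
    have := hδ t ht _ hTj (by rw [Real.dist_eq]; exact htTj)
    rwa [Real.dist_eq] at this
  have htel : ∑ i ∈ range j, d i = g (T j) - g (T 0) := by
    simp only [hd_def]
    exact Finset.sum_range_sub (fun k => g (T k)) j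
  have hfilter : (range n).filter (fun i => i < j) = range j := by
    ext i
    simp only [Finset.mem_filter, Finset.mem_range]
    omega
  have hchi : ∑ i ∈ range n, d i * (if i < j then (1:ℝ) else 0) = ∑ i ∈ range j, d i := by
    rw [← hfilter, Finset.sum_filter]
    apply Finset.sum_congr rfl
    intro i _
    by_cases hij : i < j <;> simp [hij]
  have hdecomp : g t - (g (T 0) + ∑ i ∈ range n, d i * Ψ (Λ * (t - μ i)))
      = (g t - g (T j)) + ∑ i ∈ range n,
          d i * ((if i < j then (1:ℝ) else 0) - Ψ (Λ * (t - μ i))) := by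
    have hsplit : ∑ i ∈ range n, d i * ((if i < j then (1:ℝ) else 0) - Ψ (Λ * (t - μ i)))
        = (∑ i ∈ range n, d i * (if i < j then (1:ℝ) else 0))
          - ∑ i ∈ range n, d i * Ψ (Λ * (t - μ i)) := by
      rw [← Finset.sum_sub_distrib]
      apply Finset.sum_congr rfl
      intro i _; ring
    rw [hsplit, hchi, htel]; ring
  have hterm : ∀ i ∈ range n,
      |d i * ((if i < j then (1:ℝ) else 0) - Ψ (Λ * (t - μ i)))|
      ≤ (if i+1 = j ∨ i = j then ε/6 else 0) + η * |d i| := by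
    intro i hi
    rw [Finset.mem_range] at hi
    have hΨmem := hrange (Λ * (t - μ i))
    rw [abs_mul]
    by_cases hbad : i+1 = j ∨ i = j
    · rw [if_pos hbad]
      have h1 : |((if i < j then (1:ℝ) else 0) - Ψ (Λ * (t - μ i)))| ≤ 1 := by
        by_cases hij : i < j
        · rw [if_pos hij, abs_le]
          constructor <;> [linarith [hΨmem.2]; linarith [hΨmem.1]]
        · rw [if_neg hij, zero_sub, abs_neg, abs_of_nonneg hΨmem.1]
          exact hΨmem.2
      have h2 := hdsmall i hi
      calc |d i| * |((if i < j then (1:ℝ) else 0) - Ψ (Λ * (t - μ i)))|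
          ≤ |d i| * 1 := mul_le_mul_of_nonneg_left h1 (abs_nonneg _)
        _ = |d i| := mul_one _
        _ ≤ ε/6 := h2
        _ ≤ ε/6 + η * |d i| := le_add_of_nonneg_right (mul_nonneg hη0.le (abs_nonneg _))
    · rw [if_neg hbad, zero_add]
      push_neg at hbad
      by_cases hij : i < j
      · have hij2 : i + 2 ≤ j := by omega
        have hfar : h ≤ t - μ i := by
          have hc : ((i:ℝ) + 2) ≤ x := by
            have hc0 : ((i+2 : ℕ):ℝ) ≤ (j:ℝ) := by exact_mod_cast hij2
            push_cast at hc0; linarith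
          rw [hx_def] at hc
          have hc1 : ((i:ℝ) + 3/2) * h ≤ t + M := by
            rw [← le_div_iff₀ hh0]; linarith
          have hc2 : (i:ℝ)*h + (3/2)*h ≤ t + M := by linear_combination hc1
          simp only [hμ_def]; linarith
        have hhi := hΨhi _ hfar
        rw [if_pos hij]
        have habs : |1 - Ψ (Λ * (t - μ i))| ≤ η := by
          rw [abs_le]; constructor <;> [linarith [hΨmem.2]; linarith]
        calc |d i| * |1 - Ψ (Λ * (t - μ i))| ≤ |d i| * η :=
              mul_le_mul_of_nonneg_left habs (abs_nonneg _)
          _ = η * |d i| := by ring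
      · have hij2 : j + 1 ≤ i := by omega
        have hfar : t - μ i ≤ -h := by
          have h1 : x < (i:ℝ) := by
            have hc0 : ((j+1 : ℕ):ℝ) ≤ (i:ℝ) := by exact_mod_cast hij2
            push_cast at hc0; linarith
          rw [hx_def] at h1
          have h2 : t + M < ((i:ℝ) - 1/2) * h := by
            rw [← div_lt_iff₀ hh0]; linarith
          have h3 : t + M < (i:ℝ)*h - (1/2)*h := by linear_combination h2
          simp only [hμ_def]; linarith
        have hlo := hΨlo _ hfar
        rw [if_neg hij]
        have habs : |(0:ℝ) - Ψ (Λ * (t - μ i))| ≤ η := by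
          rw [zero_sub, abs_neg, abs_of_nonneg hΨmem.1]; linarith
        calc |d i| * |(0:ℝ) - Ψ (Λ * (t - μ i))| ≤ |d i| * η :=
              mul_le_mul_of_nonneg_left habs (abs_nonneg _)
          _ = η * |d i| := by ring
  have hcard : (((range n).filter (fun i => i+1 = j ∨ i = j)).card : ℝ) ≤ 2 := by
    have hsub : (range n).filter (fun i => i+1 = j ∨ i = j) ⊆ insert (j-1) {j} := by
      intro i hi
      simp only [Finset.mem_filter, Finset.mem_range] at hi
      simp only [Finset.mem_insert, Finset.mem_singleton]
      omega
    have h1 : ((range n).filter (fun i => i+1 = j ∨ i = j)).card ≤ 2 := by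
      calc _ ≤ (insert (j-1) ({j}:Finset ℕ)).card := Finset.card_le_card hsub
        _ ≤ 2 := by
          apply le_trans (Finset.card_insert_le _ _)
          simp
    exact_mod_cast h1
  have hsum_bound : ∑ i ∈ range n,
      |d i * ((if i < j then (1:ℝ) else 0) - Ψ (Λ * (t - μ i)))| ≤ 2*(ε/6) + η * S := by
    calc ∑ i ∈ range n, |d i * ((if i < j then (1:ℝ) else 0) - Ψ (Λ * (t - μ i)))|
        ≤ ∑ i ∈ range n, ((if i+1 = j ∨ i = j then ε/6 else 0) + η * |d i|) :=
          Finset.sum_le_sum hterm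
      _ = (∑ i ∈ range n, (if i+1 = j ∨ i = j then (ε/6:ℝ) else 0)) + η * S := by
          rw [Finset.sum_add_distrib, hS_def, Finset.mul_sum]
      _ ≤ 2*(ε/6) + η * S := by
          have he : (∑ i ∈ range n, (if i+1 = j ∨ i = j then (ε/6:ℝ) else 0))
              = (((range n).filter (fun i => i+1 = j ∨ i = j)).card : ℝ) * (ε/6) := by
            rw [← Finset.sum_filter, Finset.sum_const, nsmul_eq_mul]
          rw [he]
          have : (((range n).filter (fun i => i+1 = j ∨ i = j)).card : ℝ) * (ε/6)
              ≤ 2 * (ε/6) := by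
            apply mul_le_mul_of_nonneg_right hcard (by positivity)
          linarith
  have hηS : η * S ≤ ε/6 := by
    have he : η * (S+1) = ε/6 := by
      rw [hη_def]; field_simp
    nlinarith
  calc |g t - (g (T 0) + ∑ i ∈ range n, d i * Ψ (Λ * (t - μ i)))|
      = |(g t - g (T j)) + ∑ i ∈ range n,
          d i * ((if i < j then (1:ℝ) else 0) - Ψ (Λ * (t - μ i)))| := by rw [hdecomp]
    _ ≤ |g t - g (T j)| + |∑ i ∈ range n,
          d i * ((if i < j then (1:ℝ) else 0) - Ψ (Λ * (t - μ i)))| := abs_add_le _ _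
    _ ≤ |g t - g (T j)| + ∑ i ∈ range n,
          |d i * ((if i < j then (1:ℝ) else 0) - Ψ (Λ * (t - μ i)))| := by
        linarith [Finset.abs_sum_le_sum_abs
          (fun i => d i * ((if i < j then (1:ℝ) else 0) - Ψ (Λ * (t - μ i)))) (range n)]
    _ < ε/6 + (2*(ε/6) + ε/6) := by linarith
    _ < ε := by linarith

/-- The continuous map `x ↦ exp (⟨v, x⟩)` on a subset `K`. -/
noncomputable def expCM {r : ℕ} (K : Set (Fin r → ℝ)) (v : Fin r → ℝ) : C(K, ℝ) :=
  ⟨fun x => Real.exp (∑ l, v l * (x : Fin r → ℝ) l), by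
    apply Real.continuous_exp.comp
    apply continuous_finset_sum
    intro l _
    exact continuous_const.mul ((continuous_apply l).comp continuous_subtype_val)⟩

open Finset in
lemma expCM_apply {r : ℕ} (K : Set (Fin r → ℝ)) (v : Fin r → ℝ) (x : K) :
    expCM K v x = Real.exp (∑ l, v l * (x : Fin r → ℝ) l) := rfl

open Finset in
lemma expCM_mul {r : ℕ} (K : Set (Fin r → ℝ)) (v u : Fin r → ℝ) :
    expCM K v * expCM K u = expCM K (v + u) := by
  ext x
  show Real.exp _ * Real.exp _ = Real.exp _
  rw [← Real.exp_add, ← Finset.sum_add_distrib]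
  congr 1
  apply Finset.sum_congr rfl
  intro l _
  simp [Pi.add_apply]
  ring

open Finset in
lemma expCM_zero {r : ℕ} (K : Set (Fin r → ℝ)) : expCM K 0 = 1 := by
  ext x
  show Real.exp _ = 1
  simp

/-- The span of the exponential ridge functions. -/
def expSpan {r : ℕ} (K : Set (Fin r → ℝ)) : Submodule ℝ C(K, ℝ) :=
  Submodule.span ℝ (Set.range (expCM K))

lemma expSpan_one_mem {r : ℕ} (K : Set (Fin r → ℝ)) : (1 : C(K, ℝ)) ∈ expSpan K :=
  Submodule.subset_span ⟨0, expCM_zero K⟩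

lemma expSpan_mul_mem {r : ℕ} (K : Set (Fin r → ℝ)) :
    ∀ a b : C(K, ℝ), a ∈ expSpan K → b ∈ expSpan K → a * b ∈ expSpan K := by
  intro a b ha hb
  induction ha using Submodule.span_induction with
  | mem p hp =>
    induction hb using Submodule.span_induction with
    | mem q hq =>
      obtain ⟨v, rfl⟩ := hp
      obtain ⟨u, rfl⟩ := hq
      rw [expCM_mul]
      exact Submodule.subset_span ⟨v + u, rfl⟩
    | zero => rw [mul_zero]; exact Submodule.zero_mem _
    | add y z _ _ hy hz => rw [mul_add]; exact Submodule.add_mem _ hy hz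
    | smul c y _ hy => rw [mul_smul_comm]; exact Submodule.smul_mem _ _ hy
  | zero => rw [zero_mul]; exact Submodule.zero_mem _
  | add y z _ _ hy hz => rw [add_mul]; exact Submodule.add_mem _ hy hz
  | smul c y _ hy => rw [smul_mul_assoc]; exact Submodule.smul_mem _ _ hy

/-- The algebra of finite linear combinations of exponential ridge functions. -/
def expAlg {r : ℕ} (K : Set (Fin r → ℝ)) : Subalgebra ℝ C(K, ℝ) :=
  (expSpan K).toSubalgebra (expSpan_one_mem K) (expSpan_mul_mem K)

lemma expAlg_separatesPoints {r : ℕ} (K : Set (Fin r → ℝ)) :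
    (expAlg K).SeparatesPoints := by
  intro x y hxy
  have hne : (x : Fin r → ℝ) ≠ y := fun hc => hxy (Subtype.ext hc)
  obtain ⟨l, hl⟩ := Function.ne_iff.mp hne
  have hxs : ∀ z : K, ∑ l', (Pi.single l 1 : Fin r → ℝ) l' * (z : Fin r → ℝ) l'
      = (z : Fin r → ℝ) l := by
    intro z
    rw [Finset.sum_eq_single l]
    · simp
    · intro b _ hb; simp [Pi.single_apply, hb]
    · intro hl'; exact absurd (Finset.mem_univ l) hl'
  refine ⟨(expCM K (Pi.single l 1) : K → ℝ),
    ⟨expCM K (Pi.single l 1), Submodule.subset_span ⟨Pi.single l 1, rfl⟩, rfl⟩, ?_⟩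
  rw [expCM_apply, expCM_apply, hxs x, hxs y]
  exact fun hc => hl (Real.exp_injective hc)

set_option maxHeartbeats 2000000 in
lemma scalar_approx (Ψ : ℝ → ℝ) (hΨ : IsSquashing Ψ) (r : ℕ)
    (g : (Fin r → ℝ) → ℝ) (hg : Continuous g)
    (K : Set (Fin r → ℝ)) (hK : IsCompact K) (ε : ℝ) (hε : 0 < ε) :
    ∃ (n : ℕ) (c : Fin n → ℝ) (w : Fin n → Fin r → ℝ) (θ : Fin n → ℝ),
      ∀ x ∈ K, |g x - ∑ i, c i * Ψ (∑ l, w i l * x l + θ i)| < ε := by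
  haveI : CompactSpace K := isCompact_iff_compactSpace.mp hK
  have hclosure := ContinuousMap.subalgebra_topologicalClosure_eq_top_of_separatesPoints (expAlg K) (expAlg_separatesPoints K)
  set gK : C(K, ℝ) := ⟨fun x : K => g x, hg.comp continuous_subtype_val⟩ with hgK_def
  have hgKmem : gK ∈ closure ((expAlg K : Subalgebra ℝ C(K, ℝ)) : Set C(K, ℝ)) := by
    have h1 : gK ∈ (expAlg K).topologicalClosure := by rw [hclosure]; exact Algebra.mem_top
    exact h1
  obtain ⟨p, hpA, hpd⟩ := Metric.mem_closure_iff.mp hgKmem (ε/2) (by positivity)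
  have hpspan : p ∈ Submodule.span ℝ (Set.range (expCM K)) := hpA
  obtain ⟨m, α, z, hz⟩ := Submodule.mem_span_set'.mp hpspan
  have hzv : ∀ i : Fin m, ∃ v : Fin r → ℝ, expCM K v = (z i : C(K, ℝ)) := fun i => (z i).2
  choose v hv using hzv
  -- bound on inner products
  obtain ⟨C, hC⟩ := hK.exists_bound_of_continuousOn continuous_id.continuousOn
  set C0 : ℝ := max C 0 with hC0_def
  have hC0 : 0 ≤ C0 := le_max_right _ _
  set M : ℝ := (∑ i : Fin m, ∑ l : Fin r, |v i l|) * C0 + 1 with hM_def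
  have hvnonneg : 0 ≤ ∑ i : Fin m, ∑ l : Fin r, |v i l| :=
    Finset.sum_nonneg fun i _ => Finset.sum_nonneg fun l _ => abs_nonneg _
  have hM0 : 0 < M := by rw [hM_def]; positivity
  have hinner : ∀ (i : Fin m), ∀ x ∈ K, (∑ l, v i l * x l) ∈ Set.Icc (-M) M := by
    intro i x hx
    have h1 : |∑ l, v i l * x l| ≤ ∑ l, |v i l| * C0 := by
      calc |∑ l, v i l * x l| ≤ ∑ l, |v i l * x l| :=
            Finset.abs_sum_le_sum_abs _ _
        _ ≤ ∑ l, |v i l| * C0 := by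
            apply Finset.sum_le_sum
            intro l _
            rw [abs_mul]
            apply mul_le_mul_of_nonneg_left _ (abs_nonneg _)
            calc |x l| = ‖x l‖ := rfl
              _ ≤ ‖x‖ := norm_le_pi_norm x l
              _ ≤ C := hC x hx
              _ ≤ C0 := le_max_left _ _
    have h2 : ∑ l, |v i l| * C0 ≤ M - 1 := by
      rw [hM_def, ← Finset.sum_mul]
      simp only [add_sub_cancel_right]
      exact mul_le_mul_of_nonneg_right (Finset.single_le_sum
        (f := fun i : Fin m => ∑ l : Fin r, |v i l|)
        (fun i _ => Finset.sum_nonneg fun l _ => abs_nonneg _) (Finset.mem_univ i)) hC0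
    rw [Set.mem_Icc, ← abs_le]
    linarith
  -- 1D approximation of exp
  set A : ℝ := ∑ i : Fin m, |α i| with hA2_def
  have hA0 : 0 ≤ A := Finset.sum_nonneg fun i _ => abs_nonneg _
  set ε' : ℝ := ε/(2*(A+1)) with hε'_def
  have hε'0 : 0 < ε' := by rw [hε'_def]; positivity
  obtain ⟨n1, c1, a1, b1, happ⟩ :=
    one_dim_approx Ψ hΨ Real.exp Real.continuous_exp M ε' hM0 hε'0
  -- assemble
  refine ⟨m * n1,
    (fun q : Fin m × Fin n1 => α q.1 * c1 q.2) ∘ finProdFinEquiv.symm,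
    (fun q : Fin m × Fin n1 => fun l => a1 q.2 * v q.1 l) ∘ finProdFinEquiv.symm,
    (fun q : Fin m × Fin n1 => b1 q.2) ∘ finProdFinEquiv.symm, ?_⟩
  intro x hx
  set xh : K := ⟨x, hx⟩ with hxh_def
  have hsum1 : ∑ i : Fin (m * n1),
      ((fun q : Fin m × Fin n1 => α q.1 * c1 q.2) ∘ finProdFinEquiv.symm) i *
        Ψ (∑ l, ((fun q : Fin m × Fin n1 => fun l => a1 q.2 * v q.1 l) ∘ finProdFinEquiv.symm) i l * x l
          + ((fun q : Fin m × Fin n1 => b1 q.2) ∘ finProdFinEquiv.symm) i)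
      = ∑ q : Fin m × Fin n1, α q.1 * c1 q.2 * Ψ (∑ l, (a1 q.2 * v q.1 l) * x l + b1 q.2) := by
    exact Equiv.sum_comp finProdFinEquiv.symm
      (fun q : Fin m × Fin n1 => α q.1 * c1 q.2 * Ψ (∑ l, (a1 q.2 * v q.1 l) * x l + b1 q.2))
  rw [hsum1]
  have hparg : ∀ q : Fin m × Fin n1,
      ∑ l, (a1 q.2 * v q.1 l) * x l + b1 q.2 = a1 q.2 * (∑ l, v q.1 l * x l) + b1 q.2 := by
    intro q
    rw [Finset.mul_sum]
    congr 1
    apply Finset.sum_congr rfl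
    intro l _
    ring
  have hp_at : p xh = ∑ i : Fin m, α i * Real.exp (∑ l, v i l * x l) := by
    rw [← hz]
    rw [ContinuousMap.sum_apply]
    apply Finset.sum_congr rfl
    intro i _
    rw [ContinuousMap.smul_apply, ← hv i, expCM_apply, smul_eq_mul]
  have hgp : |g x - p xh| < ε/2 := by
    have := ContinuousMap.dist_apply_le_dist (f := gK) (g := p) xh
    have h2 : dist (gK xh) (p xh) < ε/2 := lt_of_le_of_lt this hpd
    rw [Real.dist_eq] at h2
    exact h2
  have hterm : ∀ i : Fin m,
      |Real.exp (∑ l, v i l * x l) - ∑ k : Fin n1, c1 k * Ψ (a1 k * (∑ l, v i l * x l) + b1 k)| < ε' :=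
    fun i => happ _ (hinner i x hx)
  have hsplit : ∑ q : Fin m × Fin n1, α q.1 * c1 q.2 * Ψ (∑ l, (a1 q.2 * v q.1 l) * x l + b1 q.2)
      = ∑ i : Fin m, α i * ∑ k : Fin n1, c1 k * Ψ (a1 k * (∑ l, v i l * x l) + b1 k) := by
    rw [Fintype.sum_prod_type]
    apply Finset.sum_congr rfl
    intro i _
    rw [Finset.mul_sum]
    apply Finset.sum_congr rfl
    intro k _
    rw [hparg (i, k)]
    ring
  rw [hsplit]
  have hpnet : |p xh - ∑ i : Fin m, α i * ∑ k : Fin n1, c1 k * Ψ (a1 k * (∑ l, v i l * x l) + b1 k)|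
      ≤ A * ε' := by
    rw [hp_at, ← Finset.sum_sub_distrib]
    calc |∑ i : Fin m, (α i * Real.exp (∑ l, v i l * x l)
            - α i * ∑ k : Fin n1, c1 k * Ψ (a1 k * (∑ l, v i l * x l) + b1 k))|
        ≤ ∑ i : Fin m, |α i * Real.exp (∑ l, v i l * x l)
            - α i * ∑ k : Fin n1, c1 k * Ψ (a1 k * (∑ l, v i l * x l) + b1 k)| :=
          Finset.abs_sum_le_sum_abs _ _
      _ ≤ ∑ i : Fin m, |α i| * ε' := by
          apply Finset.sum_le_sum
          intro i _
          rw [← mul_sub, abs_mul]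
          exact mul_le_mul_of_nonneg_left (le_of_lt (hterm i)) (abs_nonneg _)
      _ = A * ε' := by rw [hA2_def, Finset.sum_mul]
  have hAε' : A * ε' < ε/2 := by
    have he : (A+1) * ε' = ε/2 := by
      rw [hε'_def]; field_simp
    nlinarith
  calc |g x - ∑ i : Fin m, α i * ∑ k : Fin n1, c1 k * Ψ (a1 k * (∑ l, v i l * x l) + b1 k)|
      ≤ |g x - p xh| + |p xh - ∑ i : Fin m, α i * ∑ k : Fin n1, c1 k * Ψ (a1 k * (∑ l, v i l * x l) + b1 k)| := by
        have := abs_sub_abs_le_abs_sub (g x - p xh) 0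
        exact abs_sub_le _ _ _
    _ < ε/2 + ε/2 := by
        apply add_lt_add_of_lt_of_le hgp
        exact le_trans hpnet (le_of_lt hAε')
    _ = ε := by ring

/-- Multi-output single-hidden-layer feedforward networks with a squashing
activation are universal approximators of continuous vector-valued functions,
uniformly on compacta (in the sup norm on `ℝ^s`, i.e. coordinatewise). -/
theorem universal_approximation_vector_valued
    (Ψ : ℝ → ℝ) (hΨ : IsSquashing Ψ) (r s : ℕ) (hr : 1 ≤ r) (hs : 1 ≤ s)
    (f : (Fin r → ℝ) → Fin s → ℝ) (hf : Continuous f)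
    (K : Set (Fin r → ℝ)) (hK : IsCompact K)
    (ε : ℝ) (hε : 0 < ε) :
    ∃ (N : ℕ) (_ : 0 < N) (β : Fin N → Fin s → ℝ) (w : Fin N → Fin r → ℝ)
      (θ : Fin N → ℝ),
      ∀ x ∈ K, ∀ j : Fin s,
        |f x j - ∑ i, β i j * Ψ (∑ l, w i l * x l + θ i)| < ε := by
  classical
  have hcoord : ∀ j : Fin s, ∃ (n : ℕ) (c : Fin n → ℝ) (w : Fin n → Fin r → ℝ) (θ : Fin n → ℝ),
      ∀ x ∈ K, |f x j - ∑ i, c i * Ψ (∑ l, w i l * x l + θ i)| < ε := fun j =>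
    scalar_approx Ψ hΨ r (fun x => f x j) ((continuous_apply j).comp hf) K hK ε hε
  choose n c w θ hnet using hcoord
  haveI : Nonempty (Unit ⊕ (Σ j : Fin s, Fin (n j))) := ⟨Sum.inl ()⟩
  refine ⟨Fintype.card (Unit ⊕ (Σ j : Fin s, Fin (n j))), Fintype.card_pos,
    fun k => Sum.elim (fun _ => (0 : Fin s → ℝ)) (fun p => Pi.single p.1 (c p.1 p.2))
      ((Fintype.equivFin _).symm k),
    fun k => Sum.elim (fun _ => (0 : Fin r → ℝ)) (fun p => w p.1 p.2)
      ((Fintype.equivFin _).symm k),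
    fun k => Sum.elim (fun _ => (0 : ℝ)) (fun p => θ p.1 p.2)
      ((Fintype.equivFin _).symm k), ?_⟩
  intro x hx j
  have hsum : ∑ k : Fin (Fintype.card (Unit ⊕ (Σ j : Fin s, Fin (n j)))),
      (Sum.elim (fun _ => (0 : Fin s → ℝ)) (fun p => Pi.single p.1 (c p.1 p.2))
        ((Fintype.equivFin _).symm k)) j *
      Ψ (∑ l, (Sum.elim (fun _ => (0 : Fin r → ℝ)) (fun p => w p.1 p.2)
          ((Fintype.equivFin _).symm k)) l * x l
        + Sum.elim (fun _ => (0 : ℝ)) (fun p => θ p.1 p.2) ((Fintype.equivFin _).symm k))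
      = ∑ u : Unit ⊕ (Σ j : Fin s, Fin (n j)),
        (Sum.elim (fun _ => (0 : Fin s → ℝ)) (fun p => Pi.single p.1 (c p.1 p.2)) u) j *
        Ψ (∑ l, (Sum.elim (fun _ => (0 : Fin r → ℝ)) (fun p => w p.1 p.2) u) l * x l
          + Sum.elim (fun _ => (0 : ℝ)) (fun p => θ p.1 p.2) u) :=
    Equiv.sum_comp (Fintype.equivFin (Unit ⊕ (Σ j : Fin s, Fin (n j)))).symm
      (fun u => (Sum.elim (fun _ => (0 : Fin s → ℝ)) (fun p => Pi.single p.1 (c p.1 p.2)) u) j *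
        Ψ (∑ l, (Sum.elim (fun _ => (0 : Fin r → ℝ)) (fun p => w p.1 p.2) u) l * x l
          + Sum.elim (fun _ => (0 : ℝ)) (fun p => θ p.1 p.2) u))
  rw [hsum, Fintype.sum_sum_type]
  have hinl : ∑ _u : Unit,
      (Sum.elim (fun _ => (0 : Fin s → ℝ)) (fun p : Σ j : Fin s, Fin (n j) => Pi.single p.1 (c p.1 p.2)) (Sum.inl _u)) j *
      Ψ (∑ l, (Sum.elim (fun _ => (0 : Fin r → ℝ)) (fun p : Σ j : Fin s, Fin (n j) => w p.1 p.2) (Sum.inl _u)) l * x l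
        + Sum.elim (fun _ => (0 : ℝ)) (fun p : Σ j : Fin s, Fin (n j) => θ p.1 p.2) (Sum.inl _u)) = 0 := by
    simp
  rw [hinl, zero_add]
  simp only [Sum.elim_inr]
  rw [← Finset.univ_sigma_univ, ← Finset.sum_sigma' Finset.univ
    (fun j' : Fin s => (Finset.univ : Finset (Fin (n j'))))
    (fun j' i => (Pi.single j' (c j' i) : Fin s → ℝ) j * Ψ (∑ l, w j' i l * x l + θ j' i))]
  have hcollapse : ∑ j' : Fin s, ∑ i : Fin (n j'),
      (Pi.single j' (c j' i) : Fin s → ℝ) j * Ψ (∑ l, w j' i l * x l + θ j' i)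
      = ∑ i : Fin (n j), c j i * Ψ (∑ l, w j i l * x l + θ j i) := by
    rw [Finset.sum_eq_single j]
    · apply Finset.sum_congr rfl
      intro i _
      rw [Pi.single_eq_same]
    · intro j' _ hj'
      apply Finset.sum_eq_zero
      intro i _
      rw [Pi.single_apply, if_neg (fun hc => hj' hc.symm), zero_mul]
    · intro hj
      exact absurd (Finset.mem_univ j) hj
  rw [hcollapse]
  exact hnet j x hx
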